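/- Let (Ω, 𝒜, P) be a probability space, λ ∈ (0,1), and μ_1, …, μ_M ∈ ℝ. Let Y_1, …, Y_M, Z_1, …, Z_M be mutually independent real random variables with Y_m having the normal distribution with mean λ²μ_m and variance λ², and Z_m having the normal distribution with mean (1−λ²)μ_m and variance 1−λ². Write Y = (Y_1,…,Y_M), and for each m let h_m : ℝ^M → ℝ be a measurable function with values in [0,1]. Let M₀ = {m : μ_m = 0} and M₁ = {1,…,M} \ M₀, and for t ∈ [0,1] define the event E_m(t) = {Φ(Z_m/√(1−λ²)) ≤ t·h_m(Y)} ∪ {1 − Φ(Z_m/√(1−λ²)) ≤ t·(1 − h_m(Y))}. Then for every m ∈ M₀ and t ∈ [0,1], P(E_m(t)) = t, and for every (t_1,…,t_M) ∈ [0,1]^M, P(⋂_{m=1}^M E_m(t_m)) = (∏_{m∈M₀} t_m) · P(⋂_{m∈M₁} E_m(t_m)). -/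

import Mathlib

open Set MeasureTheory ProbabilityTheory Filter
open scoped ENNReal NNReal Topology

/-- The standard normal cumulative distribution function. -/
noncomputable def Phi (x : ℝ) : ℝ :=
  ((ProbabilityTheory.gaussianReal 0 1) (Set.Iic x)).toReal

namespace CompoundAux


noncomputable abbrev γ : Measure ℝ := gaussianReal 0 1

lemma vol_ac : (volume : Measure ℝ) ≪ γ := gaussianReal_absolutelyContinuous' 0 one_ne_zero

lemma noAtoms_gaussian {μ : ℝ} {v : ℝ≥0} (hv : v ≠ 0) : NoAtoms (gaussianReal μ v) := by
  constructor
  intro x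
  rw [gaussianReal_of_var_ne_zero μ hv, withDensity_apply _ (measurableSet_singleton x),
    Measure.restrict_eq_zero.mpr (measure_singleton x), lintegral_zero_measure]

instance : NullSingletonClass γ := noAtoms_gaussian one_ne_zero

lemma Phi_eq_cdf : Phi = cdf γ := by
  funext x; rw [cdf_eq_real]; rfl

lemma gamma_pos_of_vol {s : Set ℝ} (hs : (volume : Measure ℝ) s ≠ 0) : 0 < γ s := by
  rw [pos_iff_ne_zero]
  intro h0
  exact hs (vol_ac h0)

lemma Phi_strictMono : StrictMono Phi := by
  intro a b hab
  have h2 : γ (Iic b) = γ (Iic a) + γ (Ioc a b) := by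
    rw [← measure_union (Iic_disjoint_Ioc le_rfl) measurableSet_Ioc,
      Iic_union_Ioc_eq_Iic hab.le]
  have h3 : 0 < γ (Ioc a b) := by
    apply gamma_pos_of_vol
    rw [Real.volume_Ioc]
    simp [ENNReal.ofReal_eq_zero, not_le, sub_pos, hab]
  have h1 : γ (Iic a) < γ (Iic b) := by
    rw [h2]; exact ENNReal.lt_add_right (measure_ne_top _ _) h3.ne'
  exact ENNReal.toReal_strict_mono (measure_ne_top _ _) h1

lemma Phi_monotone : Monotone Phi := Phi_strictMono.monotone

lemma Phi_measurable : Measurable Phi := Phi_monotone.measurable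

lemma Phi_pos (x : ℝ) : 0 < Phi x := by
  apply ENNReal.toReal_pos _ (measure_ne_top _ _)
  exact (gamma_pos_of_vol (by simp [Real.volume_Iic])).ne'

lemma Phi_lt_one (x : ℝ) : Phi x < 1 := by
  have h2 : γ (Iic x) < 1 := by
    have hu : (1 : ℝ≥0∞) = γ (Iic x) + γ (Ioi x) := by
      rw [← measure_union (Iic_disjoint_Ioi le_rfl) measurableSet_Ioi, Iic_union_Ioi,
        measure_univ]
    have h3 : 0 < γ (Ioi x) := gamma_pos_of_vol (by simp [Real.volume_Ioi])
    rw [hu]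
    exact ENNReal.lt_add_right (by simp [← hu]) h3.ne'
  have := ENNReal.toReal_strict_mono (by simp) h2
  exact this

lemma ofReal_Phi (x : ℝ) : ENNReal.ofReal (Phi x) = γ (Iic x) :=
  ENNReal.ofReal_toReal (measure_ne_top _ _)

lemma Phi_continuous : Continuous Phi := by
  rw [Phi_eq_cdf, continuous_iff_continuousAt]
  intro x
  rw [(monotone_cdf γ).continuousAt_iff_leftLim_eq_rightLim]
  have h1 : Function.rightLim (cdf γ) x = cdf γ x := (cdf γ).rightLim_eq x
  have hs : (cdf γ).measure {x} = 0 := by rw [measure_cdf]; exact measure_singleton x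
  rw [StieltjesFunction.measure_singleton] at hs
  have hle : Function.leftLim (cdf γ) x ≤ cdf γ x := (cdf γ).mono.leftLim_le le_rfl
  have h0 := ENNReal.ofReal_eq_zero.mp hs
  have h2 : Function.leftLim (cdf γ) x = cdf γ x := by linarith
  rw [h1, h2]

lemma Phi_surj {y : ℝ} (hy : y ∈ Ioo (0:ℝ) 1) : ∃ q, Phi q = y := by
  have ht : Tendsto Phi atTop (𝓝 1) := by rw [Phi_eq_cdf]; exact tendsto_cdf_atTop γ
  have hb : Tendsto Phi atBot (𝓝 0) := by rw [Phi_eq_cdf]; exact tendsto_cdf_atBot γ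
  obtain ⟨x₁, hx₁⟩ := (hb.eventually_lt_const hy.1).exists
  obtain ⟨x₂, hx₂⟩ := (ht.eventually_const_lt hy.2).exists
  have hx : x₁ ≤ x₂ := by
    by_contra hc
    push_neg at hc
    exact absurd (Phi_monotone hc.le) (by linarith)
  have := intermediate_value_Icc hx Phi_continuous.continuousOn
    (mem_Icc.mpr ⟨hx₁.le, hx₂.le⟩)
  obtain ⟨q, _, hq⟩ := this
  exact ⟨q, hq⟩

lemma gamma_le_set {a : ℝ} (ha : a ∈ Icc (0:ℝ) 1) :
    γ {x | Phi x ≤ a} = ENNReal.ofReal a := by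
  rcases eq_or_lt_of_le ha.1 with h0 | h0
  · have : {x | Phi x ≤ a} = ∅ := by
      ext x; simp only [mem_setOf_eq, mem_empty_iff_false, iff_false, not_le, ← h0]
      exact Phi_pos x
    rw [this, measure_empty, ← h0]; simp
  rcases eq_or_lt_of_le ha.2 with h1 | h1
  · have : {x | Phi x ≤ a} = univ := by
      ext x; simp only [mem_setOf_eq, mem_univ, iff_true, h1]
      exact (Phi_lt_one x).le
    rw [this, measure_univ, h1, ENNReal.ofReal_one]
  · obtain ⟨q, hq⟩ := Phi_surj ⟨h0, h1⟩
    have : {x | Phi x ≤ a} = Iic q := by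
      ext x; simp only [mem_setOf_eq, mem_Iic, ← hq, Phi_strictMono.le_iff_le]
    rw [this, ← ofReal_Phi, hq]

lemma gamma_ge_set {b : ℝ} (hb : b ∈ Icc (0:ℝ) 1) :
    γ {x | 1 - b ≤ Phi x} = ENNReal.ofReal b := by
  rcases eq_or_lt_of_le hb.1 with h0 | h0
  · have : {x | 1 - b ≤ Phi x} = ∅ := by
      ext x
      simp only [mem_setOf_eq, mem_empty_iff_false, iff_false, not_le, ← h0, sub_zero]
      exact Phi_lt_one x
    rw [this, measure_empty, ← h0]; simp
  rcases eq_or_lt_of_le hb.2 with h1 | h1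
  · have : {x | 1 - b ≤ Phi x} = univ := by
      ext x; simp only [mem_setOf_eq, mem_univ, iff_true, ← h1, sub_self]
      exact (Phi_pos x).le
    rw [this, measure_univ, h1, ENNReal.ofReal_one]
  · obtain ⟨q, hq⟩ := Phi_surj (y := 1 - b) ⟨by linarith, by linarith⟩
    have hset : {x | 1 - b ≤ Phi x} = Ici q := by
      ext x; simp only [mem_setOf_eq, mem_Ici, ← hq, Phi_strictMono.le_iff_le]
    have hIci : γ (Ici q) = γ (Ioi q) := (measure_congr (Ioi_ae_eq_Ici (μ := γ))).symm
    have hIoi : γ (Ioi q) = 1 - γ (Iic q) := by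
      rw [← measure_univ (μ := γ), ← Iic_union_Ioi (a := q),
        measure_union (Iic_disjoint_Ioi le_rfl) measurableSet_Ioi]
      rw [ENNReal.add_sub_cancel_left (measure_ne_top _ _)]
    rw [hset, hIci, hIoi, ← ofReal_Phi, hq, ← ENNReal.ofReal_one,
      ← ENNReal.ofReal_sub _ (by linarith)]
    norm_num

lemma gamma_union {a b : ℝ} (ha : 0 ≤ a) (hb : 0 ≤ b) (hab : a + b ≤ 1) :
    γ ({x | Phi x ≤ a} ∪ {x | 1 - Phi x ≤ b}) = ENNReal.ofReal (a + b) := by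
  have hBrw : {x : ℝ | 1 - Phi x ≤ b} = {x | 1 - b ≤ Phi x} := by
    ext x; simp only [mem_setOf_eq]; constructor <;> intro <;> linarith
  rw [hBrw]
  have hA : γ {x | Phi x ≤ a} = ENNReal.ofReal a := gamma_le_set ⟨ha, by linarith⟩
  have hB : γ {x | 1 - b ≤ Phi x} = ENNReal.ofReal b := gamma_ge_set ⟨hb, by linarith⟩
  have hABmeas : MeasurableSet {x : ℝ | 1 - b ≤ Phi x} := by
    have : {x : ℝ | 1 - b ≤ Phi x} = Phi ⁻¹' Ici (1 - b) := rfl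
    rw [this]; exact Phi_measurable measurableSet_Ici
  have hAB : γ ({x | Phi x ≤ a} ∩ {x | 1 - b ≤ Phi x}) = 0 := by
    apply Set.Subsingleton.measure_zero
    intro x hx y hy
    have hx2 : (1:ℝ) - b ≤ Phi x := hx.2
    have hy2 : (1:ℝ) - b ≤ Phi y := hy.2
    have hxa : Phi x = a := le_antisymm hx.1 (by linarith)
    have hya : Phi y = a := le_antisymm hy.1 (by linarith)
    exact Phi_strictMono.injective (hxa.trans hya.symm)
  have key := measure_union_add_inter (μ := γ) {x | Phi x ≤ a} hABmeas
  rw [hAB, add_zero] at key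
  rw [key, hA, hB, ← ENNReal.ofReal_add ha hb]



lemma measZ {l : ℝ} (hv : 0 < 1 - l ^ 2) {a b : ℝ} (ha : 0 ≤ a) (hb : 0 ≤ b)
    (hab : a + b ≤ 1) :
    gaussianReal 0 (Real.toNNReal (1 - l ^ 2))
      ({w | Phi (w / Real.sqrt (1 - l ^ 2)) ≤ a} ∪
        {w | 1 - Phi (w / Real.sqrt (1 - l ^ 2)) ≤ b})
      = ENNReal.ofReal (a + b) := by
  have hσ : 0 < Real.sqrt (1 - l ^ 2) := Real.sqrt_pos.mpr hv
  set c : ℝ := (Real.sqrt (1 - l ^ 2))⁻¹ with hc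
  have hmap : (gaussianReal 0 (Real.toNNReal (1 - l ^ 2))).map (c * ·) = γ := by
    rw [gaussianReal_map_const_mul c, mul_zero]
    congr 1
    rw [← NNReal.coe_inj]
    push_cast [NNReal.coe_mk]
    rw [Real.coe_toNNReal _ hv.le, hc, inv_pow, Real.sq_sqrt hv.le,
      inv_mul_cancel₀ hv.ne']
  have hS : MeasurableSet ({x : ℝ | Phi x ≤ a} ∪ {x | 1 - Phi x ≤ b}) := by
    exact (measurableSet_le Phi_measurable measurable_const).union
      (measurableSet_le (measurable_const.sub Phi_measurable) measurable_const)
  have hpre : ({w : ℝ | Phi (w / Real.sqrt (1 - l ^ 2)) ≤ a} ∪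
      {w | 1 - Phi (w / Real.sqrt (1 - l ^ 2)) ≤ b})
      = (c * ·) ⁻¹' ({x | Phi x ≤ a} ∪ {x | 1 - Phi x ≤ b}) := by
    ext w
    simp only [mem_union, mem_preimage, mem_setOf_eq, hc, div_eq_inv_mul]
  rw [hpre, ← Measure.map_apply (measurable_const_mul c) hS, hmap,
    gamma_union ha hb hab]

end CompoundAux

open CompoundAux

open scoped Classical in
/-- In the normal location model with training data `Y_m ~ N(λ²μ_m, λ²)` and
test data `Z_m ~ N((1−λ²)μ_m, 1−λ²)`, all mutually independent, the compound p-value events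
`E_m(t)` are uniform for null coordinates and factor over the null coordinates. -/
theorem compound_pvalues_uniform_and_indep
    {Ω : Type*} [MeasurableSpace Ω] (P : Measure Ω) [IsProbabilityMeasure P]
    (M : ℕ) (l : ℝ) (hl : l ∈ Ioo (0:ℝ) 1) (μ : Fin M → ℝ)
    (Y Z : Fin M → Ω → ℝ)
    (hY : ∀ m, Measurable (Y m)) (hZ : ∀ m, Measurable (Z m))
    (hYlaw : ∀ m, P.map (Y m) = gaussianReal (l ^ 2 * μ m) (Real.toNNReal (l ^ 2)))
    (hZlaw : ∀ m, P.map (Z m) =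
      gaussianReal ((1 - l ^ 2) * μ m) (Real.toNNReal (1 - l ^ 2)))
    (hindep : ProbabilityTheory.iIndepFun
      (m := fun _ : Fin M ⊕ Fin M => (inferInstance : MeasurableSpace ℝ)) (Sum.elim Y Z) P)
    (h : Fin M → (Fin M → ℝ) → ℝ) (hh : ∀ m, Measurable (h m))
    (hhvals : ∀ m y, h m y ∈ Icc (0:ℝ) 1)
    (E : Fin M → ℝ → Set Ω)
    (hE : ∀ m t, E m t =
      {ω | Phi (Z m ω / Real.sqrt (1 - l ^ 2)) ≤ t * h m (fun k => Y k ω)} ∪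
      {ω | 1 - Phi (Z m ω / Real.sqrt (1 - l ^ 2)) ≤ t * (1 - h m (fun k => Y k ω))}) :
    (∀ m, μ m = 0 → ∀ t ∈ Icc (0:ℝ) 1, P (E m t) = ENNReal.ofReal t) ∧
    (∀ t : Fin M → ℝ, (∀ m, t m ∈ Icc (0:ℝ) 1) →
      P (⋂ m, E m (t m)) =
        (∏ m ∈ Finset.univ.filter (fun m => μ m = 0), ENNReal.ofReal (t m)) *
          P (⋂ m ∈ Finset.univ.filter (fun m => μ m ≠ 0), E m (t m))) := by
  obtain ⟨hl0, hl1⟩ := hl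
  have hvpos : 0 < 1 - l ^ 2 := by nlinarith
  have hXmeas : ∀ i, Measurable (Sum.elim Y Z i) := by rintro (m | m); exacts [hY m, hZ m]
  set ν : Fin M ⊕ Fin M → Measure ℝ := fun i => P.map (Sum.elim Y Z i) with hνdef
  have hprob : ∀ i, IsProbabilityMeasure (ν i) := fun i =>
    Measure.isProbabilityMeasure_map (hXmeas i).aemeasurable
  haveI : ∀ i, IsProbabilityMeasure (ν i) := hprob
  haveI : ∀ i, SigmaFinite (ν i) := fun i => inferInstance
  haveI hprobL : ∀ m : Fin M, IsProbabilityMeasure (ν (Sum.inl m)) := fun m => hprob _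
  haveI hprobR : ∀ m : Fin M, IsProbabilityMeasure (ν (Sum.inr m)) := fun m => hprob _
  haveI : ∀ m : Fin M, SigmaFinite (ν (Sum.inl m)) := fun m => inferInstance
  haveI : ∀ m : Fin M, SigmaFinite (ν (Sum.inr m)) := fun m => inferInstance
  -- the coordinate sets
  set A : ℝ → Fin M → (Fin M → ℝ) → Set ℝ := fun s m y =>
    {w | Phi (w / Real.sqrt (1 - l ^ 2)) ≤ s * h m y} ∪
    {w | 1 - Phi (w / Real.sqrt (1 - l ^ 2)) ≤ s * (1 - h m y)} with hAdef
  -- measurability of y ↦ ν (inr m) (A s m y)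
  have hAmeas : ∀ (s : ℝ) (m : Fin M), Measurable (fun y => ν (Sum.inr m) (A s m y)) := by
    intro s m
    have hW : MeasurableSet ({q : (Fin M → ℝ) × ℝ | Phi (q.2 / Real.sqrt (1 - l ^ 2)) ≤ s * h m q.1} ∪
        {q | 1 - Phi (q.2 / Real.sqrt (1 - l ^ 2)) ≤ s * (1 - h m q.1)}) := by
      refine MeasurableSet.union ?_ ?_
      · exact measurableSet_le (Phi_measurable.comp (measurable_snd.div_const _))
          (((hh m).comp measurable_fst).const_mul s)
      · exact measurableSet_le (measurable_const.sub
          (Phi_measurable.comp (measurable_snd.div_const _)))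
          ((measurable_const.sub ((hh m).comp measurable_fst)).const_mul s)
    exact measurable_measure_prodMk_left hW
  -- null-coordinate evaluation
  have hnull : ∀ m, μ m = 0 → ∀ s, s ∈ Icc (0:ℝ) 1 → ∀ y,
      ν (Sum.inr m) (A s m y) = ENNReal.ofReal s := by
    intro m hm s hs y
    have hZm : ν (Sum.inr m) = gaussianReal 0 (Real.toNNReal (1 - l ^ 2)) := by
      show P.map (Z m) = _
      rw [hZlaw m, hm, mul_zero]
    have h1 := (hhvals m y).1
    have h2 := (hhvals m y).2
    have key := measZ (l := l) hvpos (a := s * h m y) (b := s * (1 - h m y))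
      (mul_nonneg hs.1 h1) (mul_nonneg hs.1 (by linarith))
      (by have : s * h m y + s * (1 - h m y) = s := by ring
          linarith [hs.2])
    rw [hZm]
    rw [hAdef]
    simp only []
    rw [key]
    congr 1
    ring
  -- master computation
  have master : ∀ (t : Fin M → ℝ) (F : Finset (Fin M)),
      P (⋂ m ∈ F, E m (t m)) =
        ∫⁻ y, ∏ m ∈ F, ν (Sum.inr m) (A (t m) m y)
          ∂(Measure.pi fun i : Fin M => ν (Sum.inl i)) := by
    intro t F
    have hg : Measurable (fun ω (i : Fin M ⊕ Fin M) => Sum.elim Y Z i ω) :=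
      measurable_pi_lambda _ hXmeas
    have hmap : P.map (fun ω i => Sum.elim Y Z i ω) = Measure.pi ν := by
      refine (Measure.pi_eq fun s hs => ?_).symm
      rw [Measure.map_apply hg (MeasurableSet.univ_pi hs)]
      have hpre : (fun ω i => Sum.elim Y Z i ω) ⁻¹' univ.pi s
          = ⋂ i ∈ Finset.univ, Sum.elim Y Z i ⁻¹' s i := by
        ext ω; simp [Set.mem_pi]
      rw [hpre, hindep.measure_inter_preimage_eq_mul Finset.univ (fun i _ => hs i)]
      exact Finset.prod_congr rfl fun i _ => (Measure.map_apply (hXmeas i) (hs i)).symm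
    set S : Set ((Fin M ⊕ Fin M) → ℝ) := ⋂ m ∈ F,
      ({f | Phi (f (Sum.inr m) / Real.sqrt (1 - l ^ 2)) ≤ t m * h m (fun k => f (Sum.inl k))} ∪
       {f | 1 - Phi (f (Sum.inr m) / Real.sqrt (1 - l ^ 2)) ≤
          t m * (1 - h m (fun k => f (Sum.inl k)))}) with hSdef
    have hhcomp : ∀ m : Fin M, Measurable fun f : (Fin M ⊕ Fin M) → ℝ =>
        h m (fun k => f (Sum.inl k)) := fun m =>
      (hh m).comp (measurable_pi_lambda _ fun k => measurable_pi_apply (Sum.inl k))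
    have hS : MeasurableSet S := by
      refine Finset.measurableSet_biInter F fun m _ => MeasurableSet.union ?_ ?_
      · exact measurableSet_le
          (Phi_measurable.comp ((measurable_pi_apply (Sum.inr m)).div_const _))
          ((hhcomp m).const_mul _)
      · exact measurableSet_le (measurable_const.sub
          (Phi_measurable.comp ((measurable_pi_apply (Sum.inr m)).div_const _)))
          ((measurable_const.sub (hhcomp m)).const_mul _)
    have hEpre : (⋂ m ∈ F, E m (t m)) = (fun ω i => Sum.elim Y Z i ω) ⁻¹' S := by
      ext ω
      simp only [hSdef, mem_iInter, mem_preimage, hE, mem_union, mem_setOf_eq,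
        Sum.elim_inl, Sum.elim_inr]
    rw [hEpre, ← Measure.map_apply hg hS, hmap]
    have hMP := MeasureTheory.measurePreserving_sumPiEquivProdPi_symm
      (X := fun _ : Fin M ⊕ Fin M => ℝ) ν
    rw [← hMP.measure_preimage hS.nullMeasurableSet]
    have hpre2 : (MeasurableEquiv.sumPiEquivProdPi (fun _ : Fin M ⊕ Fin M => ℝ)).symm ⁻¹' S
        = ⋂ m ∈ F, {p : (Fin M → ℝ) × (Fin M → ℝ) | p.2 m ∈ A (t m) m p.1} := by
      ext p
      simp only [hSdef, mem_preimage, mem_iInter, mem_union, mem_setOf_eq, hAdef,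
        MeasurableEquiv.coe_sumPiEquivProdPi_symm, Equiv.sumPiEquivProdPi_symm_apply]
    rw [hpre2]
    have hT : MeasurableSet (⋂ m ∈ F,
        {p : (Fin M → ℝ) × (Fin M → ℝ) | p.2 m ∈ A (t m) m p.1}) := by
      refine Finset.measurableSet_biInter F fun m _ => ?_
      rw [hAdef]
      refine MeasurableSet.union ?_ ?_
      · exact measurableSet_le
          (Phi_measurable.comp ((measurable_pi_apply m).comp measurable_snd |>.div_const _))
          (((hh m).comp measurable_fst).const_mul _)
      · exact measurableSet_le (measurable_const.sub
          (Phi_measurable.comp ((measurable_pi_apply m).comp measurable_snd |>.div_const _)))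
          ((measurable_const.sub ((hh m).comp measurable_fst)).const_mul _)
    rw [Measure.prod_apply hT]
    refine lintegral_congr fun y => ?_
    have hslice : (Prod.mk y ⁻¹' ⋂ m ∈ F,
        {p : (Fin M → ℝ) × (Fin M → ℝ) | p.2 m ∈ A (t m) m p.1})
        = univ.pi (fun m => if m ∈ F then A (t m) m y else univ) := by
      ext z
      simp only [mem_preimage, mem_iInter, mem_setOf_eq, Set.mem_pi, mem_univ, true_implies]
      constructor
      · intro hz m
        by_cases hm : m ∈ F
        · simpa [hm] using hz m hm
        · simp [hm]
      · intro hz m hm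
        have := hz m
        simpa [hm] using this
    rw [hslice, Measure.pi_pi]
    have hstep : ∀ m : Fin M, ν (Sum.inr m) (if m ∈ F then A (t m) m y else univ)
        = if m ∈ F then ν (Sum.inr m) (A (t m) m y) else 1 := by
      intro m
      split <;> simp
    simp_rw [hstep]
    rw [Finset.prod_ite_mem Finset.univ F (fun m => ν (Sum.inr m) (A (t m) m y)),
      Finset.univ_inter]
  constructor
  · intro m hm t ht
    have hmas := master (fun _ => t) {m}
    rw [Finset.set_biInter_singleton] at hmas
    rw [hmas]
    calc ∫⁻ y, ∏ m' ∈ ({m} : Finset (Fin M)), ν (Sum.inr m') (A t m' y)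
          ∂(Measure.pi fun i : Fin M => ν (Sum.inl i))
        = ∫⁻ _, ENNReal.ofReal t ∂(Measure.pi fun i : Fin M => ν (Sum.inl i)) := by
          refine lintegral_congr fun y => ?_
          rw [Finset.prod_singleton, hnull m hm t ht y]
      _ = ENNReal.ofReal t := by
          rw [lintegral_const, measure_univ, mul_one]
  · intro t ht
    have huniv : (⋂ m, E m (t m)) = ⋂ m ∈ Finset.univ, E m (t m) := by simp
    rw [huniv, master t Finset.univ]
    have hsplit : ∀ y : Fin M → ℝ, (∏ m, ν (Sum.inr m) (A (t m) m y)) =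
        (∏ m ∈ Finset.univ.filter (fun m => μ m = 0), ENNReal.ofReal (t m)) *
          ∏ m ∈ Finset.univ.filter (fun m => μ m ≠ 0), ν (Sum.inr m) (A (t m) m y) := by
      intro y
      rw [← Finset.prod_filter_mul_prod_filter_not Finset.univ (fun m => μ m = 0)
        (fun m => ν (Sum.inr m) (A (t m) m y))]
      congr 1
      exact Finset.prod_congr rfl fun m hm =>
        hnull m (by simpa using (Finset.mem_filter.mp hm).2) (t m) (ht m) y
    simp_rw [hsplit]
    rw [lintegral_const_mul _ (Finset.measurable_prod _ fun m _ => hAmeas (t m) m)]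
    congr 1
    exact (master t (Finset.univ.filter fun m => μ m ≠ 0)).symm
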